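/- If I is a strongly d-Golod monomial ideal in K[x_1,...,x_n], then its integral closure Ī is strongly d-Golod. -/

import Mathlib

/-- An ideal of `K[x_1,…,x_n]` is a monomial ideal if with each polynomial it contains
all the monomials in its support. -/
def IsMonomialIdeal {K : Type*} [Field K] {n : ℕ}
    (I : Ideal (MvPolynomial (Fin n) K)) : Prop :=
  ∀ f ∈ I, ∀ m ∈ f.support, MvPolynomial.monomial m (1 : K) ∈ I

/-- A monomial ideal `L` of `K[x_1,…,x_n]` is strongly d-Golod if for all monomials
`u, v ∈ L` and all variables `x_i ∣ u`, `x_j ∣ v`, one has `uv/(x_i x_j) ∈ L`. -/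
def StronglyDGolod {K : Type*} [Field K] {n : ℕ}
    (L : Ideal (MvPolynomial (Fin n) K)) : Prop :=
  ∀ a b : Fin n →₀ ℕ, MvPolynomial.monomial a (1 : K) ∈ L →
    MvPolynomial.monomial b (1 : K) ∈ L →
    ∀ i j : Fin n, a i ≠ 0 → b j ≠ 0 →
      MvPolynomial.monomial (a + b - Finsupp.single i 1 - Finsupp.single j 1) (1 : K) ∈ L

/-- The integral closure of a monomial ideal `I`: the (monomial) ideal generated by
all monomials `u` such that `u^m ∈ I^m` for some `m ≥ 1`. -/
noncomputable def monomialIntegralClosure {K : Type*} [Field K] {n : ℕ}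
    (I : Ideal (MvPolynomial (Fin n) K)) : Ideal (MvPolynomial (Fin n) K) :=
  Ideal.span {p | ∃ a : Fin n →₀ ℕ, p = MvPolynomial.monomial a (1 : K) ∧
    ∃ m : ℕ, 1 ≤ m ∧ (MvPolynomial.monomial a (1 : K)) ^ m ∈ I ^ m}

/-!
Monomials of the integral closure are exactly the `u` with `u^m ∈ I^m` for some `m ≥ 1`, so for
`u^p ∈ I^p` and `v^q ∈ I^q` we get `(uv)^k ∈ I^(2k)` with `k = pq`, and it suffices to divide by
`(x_i x_j)^k` while losing only `k` factors of `I`. One division costs one factor: write a monomial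
`w ∈ I^(s+1)` as `c w'` with `c ∈ I`, `x_i ∣ c`, `w' ∈ I^s`. If `x_j ∣ w'`, split `w' = c' w''` with
`c' ∈ I`, `x_j ∣ c'`, and replace `c c'` by `c c'/(x_i x_j) ∈ I`; otherwise `x_i x_j ∣ c`, and
`w/(x_i x_j)` is a multiple of `w' ∈ I^s`.
-/

section

open MvPolynomial Finsupp

variable {K : Type*} [Field K] {n : ℕ}

theorem monomial_mem_of_le {J : Ideal (MvPolynomial (Fin n) K)} {a b : Fin n →₀ ℕ}
    (ha : monomial a (1 : K) ∈ J) (hab : a ≤ b) : monomial b (1 : K) ∈ J :=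
  J.mem_of_dvd (monomial_dvd_monomial.mpr ⟨Or.inr hab, one_dvd _⟩) ha

theorem monomial_nsmul_mem_pow_mul {J : Ideal (MvPolynomial (Fin n) K)} {a : Fin n →₀ ℕ}
    {m : ℕ} (h : monomial (m • a) (1 : K) ∈ J ^ m) (l : ℕ) :
    monomial ((m * l) • a) (1 : K) ∈ J ^ (m * l) := by
  have := Ideal.pow_mem_pow h l
  rwa [monomial_pow, one_pow, ← pow_mul, smul_smul, mul_comm l] at this

theorem monomial_mem_monomialIntegralClosure_iff {I : Ideal (MvPolynomial (Fin n) K)}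
    {a : Fin n →₀ ℕ} :
    monomial a (1 : K) ∈ monomialIntegralClosure I ↔
      ∃ m, 1 ≤ m ∧ monomial (m • a) (1 : K) ∈ I ^ m := by
  have hspan : monomialIntegralClosure I = Ideal.span ((fun s => monomial s (1 : K)) ''
      {c | ∃ m, 1 ≤ m ∧ monomial (m • c) (1 : K) ∈ I ^ m}) := by
    simp only [monomialIntegralClosure, monomial_pow, one_pow]
    congr 1
    ext p
    simp only [Set.mem_ofPred_eq, Set.mem_image]
    exact ⟨fun ⟨c, hp, hc⟩ => ⟨c, hc, hp.symm⟩, fun ⟨c, hc, hp⟩ => ⟨c, hp.symm, hc⟩⟩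
  rw [hspan]
  constructor
  · intro h
    obtain ⟨c, ⟨m, hm, hc⟩, hca⟩ := mem_ideal_span_monomial_image.mp h a (by simp)
    exact ⟨m, hm, monomial_mem_of_le hc (nsmul_le_nsmul_right hca m)⟩
  · exact fun h => Ideal.subset_span ⟨a, h, rfl⟩

namespace IsMonomialIdeal

variable {I J L : Ideal (MvPolynomial (Fin n) K)}

theorem exists_add_eq_of_mem_support_mul (hJ : IsMonomialIdeal J) (hL : IsMonomialIdeal L)
    {f : MvPolynomial (Fin n) K} (hf : f ∈ J * L) {m : Fin n →₀ ℕ} (hm : m ∈ f.support) :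
    ∃ a b, monomial a (1 : K) ∈ J ∧ monomial b (1 : K) ∈ L ∧ a + b = m := by
  classical
  revert hm
  refine Submodule.mul_induction_on hf ?_ ?_
  · intro g hg h hh hm
    obtain ⟨a, ha, b, hb, hab⟩ := Finset.mem_add.mp (support_mul g h hm)
    exact ⟨a, b, hJ g hg a ha, hL h hh b hb, hab⟩
  · intro f₁ f₂ ih₁ ih₂ hm
    rcases Finset.mem_union.mp (MvPolynomial.support_add hm) with h | h
    exacts [ih₁ h, ih₂ h]

theorem mul (hJ : IsMonomialIdeal J) (hL : IsMonomialIdeal L) : IsMonomialIdeal (J * L) := by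
  intro f hf m hm
  obtain ⟨a, b, ha, hb, rfl⟩ := exists_add_eq_of_mem_support_mul hJ hL hf hm
  rw [← one_mul (1 : K), ← monomial_mul]
  exact Ideal.mul_mem_mul ha hb

theorem pow (hI : IsMonomialIdeal I) (s : ℕ) : IsMonomialIdeal (I ^ s) := by
  induction s with
  | zero => intro _ _ _ _; simp
  | succ s ih => rw [pow_succ]; exact ih.mul hI

theorem exists_add_eq_of_monomial_mem_pow_succ (hI : IsMonomialIdeal I) {s : ℕ}
    {U : Fin n →₀ ℕ} (hU : monomial U (1 : K) ∈ I ^ (s + 1)) {i : Fin n} (hi : U i ≠ 0) :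
    ∃ c V, monomial c (1 : K) ∈ I ∧ c i ≠ 0 ∧ monomial V (1 : K) ∈ I ^ s ∧ c + V = U := by
  induction s generalizing U with
  | zero => exact ⟨U, 0, by simpa using hU, hi, by simp, add_zero U⟩
  | succ s ih =>
    rw [pow_succ] at hU
    obtain ⟨a, b, ha, hb, rfl⟩ :=
      exists_add_eq_of_mem_support_mul (hI.pow _) hI hU (m := U) (by simp)
    by_cases hbi : b i = 0
    · obtain ⟨c, V, hc, hci, hV, rfl⟩ := ih ha (by simpa [hbi] using hi)
      refine ⟨c, V + b, hc, hci, ?_, (add_assoc c V b).symm⟩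
      rw [pow_succ, ← one_mul (1 : K), ← monomial_mul]
      exact Ideal.mul_mem_mul hV hb
    · exact ⟨b, a, hb, hbi, ha, add_comm b a⟩

end IsMonomialIdeal

namespace StronglyDGolod

variable {I : Ideal (MvPolynomial (Fin n) K)}

theorem monomial_tsub_mem_pow (hIG : StronglyDGolod I) (hI : IsMonomialIdeal I) {s : ℕ}
    {U : Fin n →₀ ℕ} (hU : monomial U (1 : K) ∈ I ^ (s + 1)) {i j : Fin n}
    (hE : single i 1 + single j 1 ≤ U) :
    monomial (U - (single i 1 + single j 1)) (1 : K) ∈ I ^ s := by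
  set E : Fin n →₀ ℕ := single i 1 + single j 1
  have hUi : U i ≠ 0 := by
    have := hE i
    simp only [E, Finsupp.add_apply, single_eq_same] at this
    omega
  obtain ⟨c, V, hc, hci, hV, rfl⟩ := hI.exists_add_eq_of_monomial_mem_pow_succ hU hUi
  by_cases hVj : V j = 0
  · have hEc : E ≤ c := fun m => by
      have := hE m
      simp only [E, Finsupp.add_apply, single_apply] at this ⊢
      split_ifs at this ⊢ <;> subst_vars <;> omega
    refine monomial_mem_of_le hV ?_
    rw [add_comm c, add_tsub_assoc_of_le hEc]
    exact le_self_add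
  · rcases s with _ | s
    · simp
    obtain ⟨c', W, hc', hc'j, hW, rfl⟩ := hI.exists_add_eq_of_monomial_mem_pow_succ hV hVj
    have hEcc : E ≤ c + c' := add_le_add (single_le_iff.mpr (by omega))
      (single_le_iff.mpr (by omega))
    have hgolod := hIG c c' hc hc' i j hci hc'j
    rw [tsub_tsub] at hgolod
    rw [← add_assoc, ← tsub_add_eq_add_tsub hEcc, pow_succ', ← one_mul (1 : K), ← monomial_mul]
    exact Ideal.mul_mem_mul hgolod hW

theorem monomial_tsub_nsmul_mem_pow (hIG : StronglyDGolod I) (hI : IsMonomialIdeal I)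
    {i j : Fin n} {s r : ℕ} {U : Fin n →₀ ℕ} (hU : monomial U (1 : K) ∈ I ^ (s + r))
    (hE : r • (single i 1 + single j 1) ≤ U) :
    monomial (U - r • (single i 1 + single j 1)) (1 : K) ∈ I ^ s := by
  induction r generalizing U with
  | zero => simpa using hU
  | succ r ih =>
    rw [← add_assoc] at hU
    rw [succ_nsmul'] at hE ⊢
    have hstep := hIG.monomial_tsub_mem_pow hI hU (le_self_add.trans hE)
    rw [← tsub_tsub]
    exact ih hstep (le_tsub_of_add_le_left hE)

end StronglyDGolod

end

open MvPolynomial Finsupp in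
/-- If `I` is a strongly d-Golod monomial ideal of `K[x_1,…,x_n]`, then its integral
closure `Ī` is strongly d-Golod. -/
theorem stronglyDGolod_integralClosure {K : Type*} [Field K] {n : ℕ}
    (I : Ideal (MvPolynomial (Fin n) K))
    (hI : IsMonomialIdeal I) (hIG : StronglyDGolod I) :
    StronglyDGolod (monomialIntegralClosure I) := by
  intro a b ha hb i j hai hbj
  obtain ⟨p, hp, hpa⟩ := monomial_mem_monomialIntegralClosure_iff.mp ha
  obtain ⟨q, hq, hqb⟩ := monomial_mem_monomialIntegralClosure_iff.mp hb
  set k := p * q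
  have hk : monomial (k • (a + b)) (1 : K) ∈ I ^ (k + k) := by
    have hka := monomial_nsmul_mem_pow_mul hpa q
    have hkb := monomial_nsmul_mem_pow_mul hqb p
    rw [mul_comm q p] at hkb
    rw [smul_add, ← one_mul (1 : K), ← monomial_mul, pow_add]
    exact Ideal.mul_mem_mul hka hkb
  have hE : single i 1 + single j 1 ≤ a + b :=
    add_le_add (single_le_iff.mpr (by omega)) (single_le_iff.mpr (by omega))
  have hgolod := hIG.monomial_tsub_nsmul_mem_pow hI hk (nsmul_le_nsmul_right hE k)
  refine monomial_mem_monomialIntegralClosure_iff.mpr ⟨k, Nat.mul_pos hp hq, ?_⟩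
  have hsmul : k • (a + b - (single i 1 + single j 1)) =
      k • (a + b) - k • (single i 1 + single j 1) := by
    ext m
    simp only [Finsupp.tsub_apply, Finsupp.smul_apply, smul_eq_mul, Nat.mul_sub]
  rwa [tsub_tsub, hsmul]
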